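/- arXiv:1811.08420 — 4 statements merged into one kernel-verified Lean document; each statement's English description precedes it below -/
import Mathlib

section
/- Let P : ℤ → ℤ be a parent function with P(0) = 0 and P(−1) = −1 (equivalently, min P⁻¹({0}) = 0). Define u : ℤ → ℤ by u(i) = |P⁻¹({i})| (which is a well-defined positive integer), and let Δ be the accumulation function of u. Then for all i, j ∈ ℤ: P(j) = i if and only if Δ(i) ≤ j ≤ Δ(i+1) − 1. -/
/-!
The least elements `m i` of the fibers of a monotone surjection `P : ℤ → ℤ` form a lower
adjoint of `P`, so the fiber over `i` is `[m i, m (i + 1))` and `u i = m (i + 1) - m i`.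
As `P 0 = 0` and `P (-1) = -1` force `m 0 = 0`, the telescoping sums `accum u` recover `m`.
-/

/-- The accumulation function of a bi-infinite sequence `u : ℤ → ℤ`:
`Δ(i) = ∑_{k=0}^{i-1} u(k)` for `i ≥ 1`, `Δ(0) = 0`, and
`Δ(i) = -∑_{k=i}^{-1} u(k)` for `i ≤ -1`. -/
def accum (u : ℤ → ℤ) (i : ℤ) : ℤ :=
  if 0 ≤ i then ∑ k ∈ Finset.range i.toNat, u (k : ℤ)
  else -(∑ k ∈ Finset.range (-i).toNat, u (i + (k : ℤ)))

lemma accum_add_one (u : ℤ → ℤ) (i : ℤ) : accum u (i + 1) = accum u i + u i := by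
  unfold accum
  rcases le_or_gt 0 i with hi | hi
  · rw [if_pos (by omega), if_pos hi, show (i + 1).toNat = i.toNat + 1 by omega,
      Finset.sum_range_succ, Int.toNat_of_nonneg hi]
  obtain hi1 | hi' := eq_or_lt_of_le (show i + 1 ≤ 0 by omega)
  · obtain rfl : i = -1 := by omega
    simp
  rw [if_neg (by omega), if_neg (by omega), show (-i).toNat = (-(i + 1)).toNat + 1 by omega,
    Finset.sum_range_succ']
  simp only [Nat.cast_add, Nat.cast_one, Nat.cast_zero, add_zero, add_assoc, add_comm (1 : ℤ)]
  ring

lemma accum_eq_of_add_one {u f : ℤ → ℤ} (hf0 : f 0 = 0) (hf : ∀ i, f (i + 1) = f i + u i) :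
    accum u = f := by
  funext i
  induction i using Int.induction_on with
  | zero => simp [accum, hf0]
  | succ n ih => rw [accum_add_one, ih, hf]
  | pred n ih =>
    have := accum_add_one u (-n - 1)
    have := hf (-n - 1)
    simp only [sub_add_cancel] at *
    omega

lemma Monotone.exists_isLeast_fiber {P : ℤ → ℤ} (hsurj : Function.Surjective P)
    (hmono : Monotone P) (i : ℤ) : ∃ m, IsLeast {j | P j = i} m := by
  obtain ⟨b, hb⟩ := hsurj (i - 1)
  have hbdd : ∀ j, P j = i → b < j := fun j hj =>
    lt_of_not_ge fun hjb => by have := hmono hjb; omega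
  obtain ⟨m, hm, hmin⟩ := Int.exists_least_of_bdd ⟨b + 1, hbdd⟩ (hsurj i)
  exact ⟨m, hm, hmin⟩

lemma Monotone.galoisConnection_of_isLeast_fiber {α β : Type*} [LinearOrder α] [PartialOrder β]
    {P : α → β} {m : β → α} (hmono : Monotone P) (hm : ∀ i, IsLeast {j | P j = i} (m i)) :
    GaloisConnection m P := by
  intro i j
  refine ⟨fun h => (hm i).1 ▸ hmono h, fun h => le_of_not_gt fun hj => ?_⟩
  have hPj : P j = i := le_antisymm ((hm i).1 ▸ hmono hj.le) h
  exact hj.not_ge ((hm i).2 hPj)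

lemma GaloisConnection.eq_iff_le_and_lt {m P : ℤ → ℤ} (gc : GaloisConnection m P)
    (i j : ℤ) : P j = i ↔ m i ≤ j ∧ j < m (i + 1) := by
  rw [gc, ← not_le, gc]
  omega

/-- Let `P : ℤ → ℤ` be a parent function (surjective, monotone) with
`P 0 = 0` and `P (-1) = -1` (equivalently `min P⁻¹({0}) = 0`).  Let `u i` be the
cardinality of the fiber `P⁻¹({i})` (a well-defined positive integer) and `Δ` the
accumulation function of `u`.  Then `P j = i ↔ Δ i ≤ j ≤ Δ (i+1) - 1`. -/
theorem parent_function_eq_accum_intervals (P : ℤ → ℤ)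
    (hsurj : Function.Surjective P) (hmono : Monotone P)
    (h0 : P 0 = 0) (hm1 : P (-1) = -1)
    (u : ℤ → ℤ) (hu : ∀ i : ℤ, u i = (({j : ℤ | P j = i}).ncard : ℤ)) :
    (∀ i : ℤ, 1 ≤ u i) ∧
    ∀ i j : ℤ, P j = i ↔ (accum u i ≤ j ∧ j ≤ accum u (i + 1) - 1) := by
  choose m hm using hmono.exists_isLeast_fiber hsurj
  have hfiber := (hmono.galoisConnection_of_isLeast_fiber hm).eq_iff_le_and_lt
  have hm_lt (i : ℤ) : m i < m (i + 1) := ((hfiber i (m i)).1 (hm i).1).2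
  have hu_eq (i : ℤ) : u i = m (i + 1) - m i := by
    have hset : {j | P j = i} = Set.Ico (m i) (m (i + 1)) := Set.ext (hfiber i)
    rw [hu, hset, ← Finset.coe_Ico, Set.ncard_coe_finset, Int.card_Ico]
    have := hm_lt i
    omega
  have hm0 : m 0 = 0 := (hm 0).unique ⟨h0, fun j (hj : P j = 0) => le_of_not_gt fun hj0 => by
    have := hmono (show j ≤ -1 by omega)
    omega⟩
  have haccum : accum u = m := accum_eq_of_add_one hm0 fun i => by rw [hu_eq]; ring
  refine ⟨fun i => by have := hm_lt i; rw [hu_eq]; omega, fun i j => ?_⟩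
  rw [haccum, hfiber]
  omega
end

section
/- Let (A, R) be a non-deterministic substitution with an expanding eigenvalue λ > 1 witnessed by v : A → ℝ with v(a) > 0 for all a, and let Ω = {(ω^i, P_i)}_{i∈ℤ} be an orbit of (A, R). Then there exists a function Ψ : ℤ × ℤ → ℝ × ℝ with Ψ(0,0) = (0,0) such that for all (i,j) ∈ ℤ², writing Ψ(i,j) = (x,y): (1) Ψ(i, j+1) = (x + v(ω^i_j)·e^y, y), and (2) Ψ(i+1, min P_{i+1}⁻¹({j})) = (x, y − log λ). -/
/-- `P : ℤ → ℤ` is a parent function: surjective and non-decreasing. -/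
def IsParent (P : ℤ → ℤ) : Prop := Function.Surjective P ∧ Monotone P

/-- The bi-infinite word `ω` produces `ω'` with respect to the parent function `P`
under the relation `R ⊆ A × A*`: for every `i` there is a production rule `(ω i, w) ∈ R`
whose right-hand side `w` has length `|P⁻¹({i})|` and is the subword of `ω'` carried by
the fiber `P⁻¹({i})` (read from its minimum `sInf P⁻¹({i})`). -/
def Produces {A : Type*} (R : Set (A × List A)) (P : ℤ → ℤ) (ω ω' : ℤ → A) : Prop :=
  ∀ i : ℤ, ∃ w : List A, (ω i, w) ∈ R ∧ w.length = ({j : ℤ | P j = i}).ncard ∧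
    ∀ (k : ℕ) (hk : k < w.length), w.get ⟨k, hk⟩ = ω' (sInf {j : ℤ | P j = i} + (k : ℤ))

/-- An orbit of the non-deterministic substitution `(A, R)`: a family of bi-infinite
words `ω i` and parent functions `P i` such that `ω i` produces `ω (i+1)` with respect
to `P (i+1)`. -/
def IsOrbit {A : Type*} (R : Set (A × List A)) (ω : ℤ → ℤ → A) (P : ℤ → ℤ → ℤ) : Prop :=
  (∀ i : ℤ, IsParent (P i)) ∧ ∀ i : ℤ, Produces R (P (i + 1)) (ω i) (ω (i + 1))

/-!
Put level `i` at height `y = -i log λ` and lay the letters of `ω^i` side by side, the letter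
`a` taking width `v(a) e^y`. By the eigenvalue equation the children of a letter at level `i`
have total width `λ v(a) e^{y - log λ} = v(a) e^y`, exactly that of their parent; so, once
each level is anchored so that one fiber lines up with its parent, all fibers do.
-/

open Finset Function Real

theorem exists_forall_add_one_eq_add {M : Type*} [AddCommGroup M] (f : ℤ → M) (c : M) :
    ∃ F : ℤ → M, F 0 = c ∧ ∀ j, F (j + 1) = F j + f j := by
  refine ⟨fun j => c + ∑ k ∈ Ico 0 j, f k - ∑ k ∈ Ico j 0, f k, by simp, fun j => ?_⟩
  beta_reduce
  rcases le_or_gt 0 j with hj | hj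
  · rw [← insert_Ico_right_eq_Ico_add_one hj, sum_insert right_notMem_Ico,
      Ico_eq_empty_of_le hj, Ico_eq_empty_of_le (by omega : (0 : ℤ) ≤ j + 1)]
    abel
  · rw [← insert_Ico_add_one_left_eq_Ico hj, sum_insert (by simp),
      Ico_eq_empty_of_le hj.le, Ico_eq_empty_of_le (by omega : j + 1 ≤ 0)]
    abel

theorem add_natCast_eq_add_sum_range {M : Type*} [AddCommMonoid M] {F f : ℤ → M}
    (hF : ∀ j, F (j + 1) = F j + f j) (a : ℤ) (n : ℕ) :
    F (a + n) = F a + ∑ t ∈ range n, f (a + t) := by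
  induction n with
  | zero => simp
  | succ n ih => rw [Nat.cast_succ, ← add_assoc, hF, ih, sum_range_succ, add_assoc]

namespace IsParent

variable {Q : ℤ → ℤ}

theorem bddBelow_fiber (hQ : IsParent Q) (j : ℤ) : BddBelow {k | Q k = j} := by
  obtain ⟨k₀, hk₀⟩ := hQ.1 (j - 1)
  exact ⟨k₀, fun k (hk : Q k = j) => (hQ.2.reflect_lt (by omega)).le⟩

theorem map_sInf_fiber (hQ : IsParent Q) (j : ℤ) : Q (sInf {k | Q k = j}) = j :=
  Int.csInf_mem (hQ.1 j) (hQ.bddBelow_fiber j)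

theorem sInf_fiber_le_iff (hQ : IsParent Q) {j k : ℤ} : sInf {k | Q k = j} ≤ k ↔ j ≤ Q k := by
  refine ⟨fun h => hQ.map_sInf_fiber j ▸ hQ.2 h, fun h => ?_⟩
  rcases h.eq_or_lt with h | h
  · exact csInf_le (hQ.bddBelow_fiber j) h.symm
  · exact (hQ.2.reflect_lt (by rwa [hQ.map_sInf_fiber])).le

theorem fiber_eq_Ico (hQ : IsParent Q) (j : ℤ) :
    {k | Q k = j} = Set.Ico (sInf {k | Q k = j}) (sInf {k | Q k = j + 1}) := by
  ext k
  simp only [Set.mem_ofPred_eq, Set.mem_Ico, hQ.sInf_fiber_le_iff, not_le.symm]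
  omega

theorem sInf_fiber_add_one (hQ : IsParent Q) (j : ℤ) :
    sInf {k | Q k = j + 1} = sInf {k | Q k = j} + {k | Q k = j}.ncard := by
  have hle : sInf {k | Q k = j} ≤ sInf {k | Q k = j + 1} := by
    rw [hQ.sInf_fiber_le_iff, hQ.map_sInf_fiber]; omega
  have hcard := congrArg Set.ncard (hQ.fiber_eq_Ico j)
  rw [← coe_Ico, Set.ncard_coe_finset, Int.card_Ico] at hcard
  omega

end IsParent

theorem Produces.map_sInf_fiber_add_one {A : Type*} {R : Set (A × List A)} {lam : ℝ} {v : A → ℝ}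
    (hexp : ∀ p ∈ R, lam * v p.1 = (p.2.map v).sum) {Q : ℤ → ℤ} (hQ : IsParent Q)
    {ω ω' : ℤ → A} (hprod : Produces R Q ω ω') {F : ℤ → ℝ} {s : ℝ}
    (hF : ∀ k, F (k + 1) = F k + v (ω' k) * s) (j : ℤ) :
    F (sInf {k | Q k = j + 1}) = F (sInf {k | Q k = j}) + lam * v (ω j) * s := by
  obtain ⟨w, hwR, hwlen, hwget⟩ := hprod j
  have hsum : ∑ t ∈ range w.length, v (ω' (sInf {k | Q k = j} + t)) = (w.map v).sum := by
    rw [← Fin.sum_univ_eq_sum_range (fun t => v (ω' (sInf {k | Q k = j} + t))),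
      ← Fin.sum_univ_fun_getElem]
    exact sum_congr rfl fun t _ => congrArg v (hwget t t.isLt).symm
  rw [hQ.sInf_fiber_add_one, ← hwlen, add_natCast_eq_add_sum_range hF, ← sum_mul, hsum,
    hexp _ hwR]

theorem orbit_has_tiling_general {A : Type*}
    (R : Set (A × List A))
    (lam : ℝ) (v : A → ℝ) (hlam : 1 < lam)
    (hexp : ∀ p ∈ R, lam * v p.1 = (p.2.map v).sum)
    (ω : ℤ → ℤ → A) (P : ℤ → ℤ → ℤ) (horb : IsOrbit R ω P) :
    ∃ Ψ : ℤ × ℤ → ℝ × ℝ, Ψ (0, 0) = (0, 0) ∧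
      ∀ i j : ℤ,
        Ψ (i, j + 1) = ((Ψ (i, j)).1 + v (ω i j) * Real.exp (Ψ (i, j)).2, (Ψ (i, j)).2) ∧
        Ψ (i + 1, sInf {k : ℤ | P (i + 1) k = j}) =
          ((Ψ (i, j)).1, (Ψ (i, j)).2 - Real.log lam) := by
  obtain ⟨hP, hprod⟩ := horb
  set y : ℤ → ℝ := fun i => -i * log lam with hy_def
  have hy : ∀ i, y (i + 1) = y i - log lam := fun i => by simp only [hy_def]; push_cast; ring
  have hlam_exp : ∀ i, lam * exp (y (i + 1)) = exp (y i) := fun i => by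
    rw [hy, exp_sub, exp_log (by linarith)]
    field_simp
  choose F hF0 hF using fun i => exists_forall_add_one_eq_add (fun j => v (ω i j) * exp (y i)) 0
  have hmismatch : ∀ i, Periodic (fun j => F (i + 1) (sInf {k | P (i + 1) k = j}) - F i j) 1 :=
    fun i j => by
      beta_reduce
      rw [(hprod i).map_sInf_fiber_add_one hexp (hP (i + 1)) (hF (i + 1)), hF i, ← hlam_exp i]
      ring
  -- Level offsets chosen so that the fiber of `0` sits exactly under `ω^i_0`.
  obtain ⟨c, hc0, hc⟩ := exists_forall_add_one_eq_add
    (fun i => F i 0 - F (i + 1) (sInf {k | P (i + 1) k = 0})) 0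
  refine ⟨fun p => (c p.1 + F p.1 p.2, y p.1), by simp [hc0, hF0, hy_def], fun i j => ⟨?_, ?_⟩⟩
  · simp only [hF, Prod.mk.injEq, and_true]
    ring
  · have h := (hmismatch i).int_mul_eq j
    simp only [Int.cast_id, mul_one] at h
    simp only [hc, hy, Prod.mk.injEq, and_true]
    linarith

/-- If the non-deterministic substitution `(A, R)` has an expanding
eigenvalue `λ > 1` witnessed by `v : A → ℝ` with `v a > 0`, then every orbit
`Ω = {(ω^i, P_i)}` admits a tiling `Ψ : ℤ × ℤ → ℝ × ℝ` with `Ψ(0,0) = (0,0)`,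
`Ψ(i, j+1) = (x + v(ω^i_j)·e^y, y)` and `Ψ(i+1, min P_{i+1}⁻¹({j})) = (x, y - log λ)`
where `(x, y) = Ψ(i, j)`. -/
theorem orbit_has_tiling {A : Type*} [Fintype A]
    (R : Set (A × List A)) (hRfin : R.Finite)
    (lam : ℝ) (v : A → ℝ) (hlam : 1 < lam) (hv : ∀ a : A, 0 < v a)
    (hexp : ∀ p ∈ R, lam * v p.1 = (p.2.map v).sum)
    (ω : ℤ → ℤ → A) (P : ℤ → ℤ → ℤ) (horb : IsOrbit R ω P) :
    ∃ Ψ : ℤ × ℤ → ℝ × ℝ, Ψ (0, 0) = (0, 0) ∧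
      ∀ i j : ℤ,
        Ψ (i, j + 1) = ((Ψ (i, j)).1 + v (ω i j) * Real.exp (Ψ (i, j)).2, (Ψ (i, j)).2) ∧
        Ψ (i + 1, sInf {k : ℤ | P (i + 1) k = j}) =
          ((Ψ (i, j)).1, (Ψ (i, j)).2 - Real.log lam) :=
  orbit_has_tiling_general R lam v hlam hexp ω P horb
end

section
/- Let A be a finite alphabet and let R₁, R₂ ⊆ A × A* be finite sets of production rules. Define the composite relation R₁ ⋆ R₂ as the set of pairs (a, c¹c²⋯c^k) such that there exists (a, b₁b₂⋯b_k) ∈ R₁ with (b_i, cⁱ) ∈ R₂ for every 1 ≤ i ≤ k (where c¹c²⋯c^k denotes concatenation). Suppose ω produces ω' with respect to a parent function P under the relation R₁, and ω' produces ω'' with respect to a parent function Q under the relation R₂. Then P ∘ Q is a parent function, and ω produces ω'' with respect to P ∘ Q under the relation R₁ ⋆ R₂. -/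
/-- The composite relation `R₁ ⋆ R₂`: all pairs `(a, c¹c²⋯cᵏ)` such that there is
`(a, b₁⋯b_k) ∈ R₁` with `(b_i, cⁱ) ∈ R₂` for every `i`, the `cⁱ` being concatenated
in order. -/
def RelComp {A : Type*} (R₁ R₂ : Set (A × List A)) : Set (A × List A) :=
  { p | ∃ (bs : List A) (cs : List (List A)),
      (p.1, bs) ∈ R₁ ∧ List.Forall₂ (fun b c => (b, c) ∈ R₂) bs cs ∧ p.2 = cs.flatten }

def wordIco {A : Type*} (g : ℤ → A) (a b : ℤ) : List A :=
  (List.range (b - a).toNat).map fun k : ℕ => g (a + k)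

section WordIco

variable {A : Type*} (g : ℤ → A)

theorem eq_wordIco_iff {w : List A} {a b : ℤ} :
    w = wordIco g a b ↔
      w.length = (b - a).toNat ∧ ∀ (k : ℕ) (hk : k < w.length), w[k] = g (a + k) := by
  constructor
  · rintro rfl
    simp [wordIco]
  · rintro ⟨hlen, hget⟩
    exact List.ext_getElem (by simp [wordIco, hlen]) fun k hk _ => by simp [wordIco, hget k hk]

theorem wordIco_append_wordIco {a b c : ℤ} (hab : a ≤ b) (hbc : b ≤ c) :
    wordIco g a b ++ wordIco g b c = wordIco g a c := by
  obtain ⟨m, rfl⟩ := Int.exists_add_of_le hab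
  obtain ⟨n, rfl⟩ := Int.exists_add_of_le hbc
  have hac : a + m + n - a = ((m + n : ℕ) : ℤ) := by push_cast; ring
  simp only [wordIco, hac, add_sub_cancel_left, Int.toNat_natCast, List.range_add, List.map_append,
    List.map_map]
  congr 2
  ext k
  simp only [Function.comp_apply, Nat.cast_add, add_assoc]

theorem flatten_map_wordIco {s : ℤ → ℤ} (hs : Monotone s) (a : ℤ) (n : ℕ) :
    ((List.range n).map fun k : ℕ => wordIco g (s (a + k)) (s (a + k + 1))).flatten =
      wordIco g (s a) (s (a + n)) := by
  induction n with
  | zero => simp [wordIco]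
  | succ n ih =>
    rw [List.range_succ, List.map_append, List.flatten_append, ih, List.map_singleton,
      List.flatten_singleton, Nat.cast_succ, ← add_assoc,
      wordIco_append_wordIco g (hs (by omega)) (hs (by omega))]

theorem mem_relComp_wordIco {R₁ R₂ : Set (A × List A)} {ω ω' ω'' : ℤ → A} {s t : ℤ → ℤ}
    (hs : Monotone s) (ht : Monotone t) (i : ℤ)
    (h₁ : (ω i, wordIco ω' (s i) (s (i + 1))) ∈ R₁)
    (h₂ : ∀ j, (ω' j, wordIco ω'' (t j) (t (j + 1))) ∈ R₂) :
    (ω i, wordIco ω'' (t (s i)) (t (s (i + 1)))) ∈ RelComp R₁ R₂ := by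
  obtain ⟨n, hn⟩ := Int.exists_add_of_le (hs (Int.le_add_one le_rfl) : s i ≤ s (i + 1))
  refine ⟨_, (List.range n).map fun k : ℕ => wordIco ω'' (t (s i + k)) (t (s i + k + 1)),
    h₁, ?_, ?_⟩
  · rw [hn, wordIco, add_sub_cancel_left, Int.toNat_natCast, List.forall₂_map_left_iff,
      List.forall₂_map_right_iff, List.forall₂_same]
    exact fun _ _ => h₂ _
  · rw [flatten_map_wordIco ω'' ht, hn]

end WordIco

noncomputable def firstChild (P : ℤ → ℤ) (i : ℤ) : ℤ := sInf {j | P j = i}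

namespace IsParent

variable {P Q : ℤ → ℤ}

theorem comp (hP : IsParent P) (hQ : IsParent Q) : IsParent (P ∘ Q) :=
  ⟨hP.1.comp hQ.1, hP.2.comp hQ.2⟩

theorem bddBelow_fiber_s10 (hP : IsParent P) (i : ℤ) : BddBelow {j | P j = i} := by
  obtain ⟨j₀, hj₀⟩ := hP.1 (i - 1)
  refine ⟨j₀, fun j (hj : P j = i) => ?_⟩
  by_contra! h
  have := hP.2 h.le
  omega

theorem apply_firstChild (hP : IsParent P) (i : ℤ) : P (firstChild P i) = i :=
  Int.csInf_mem (hP.1 i) (hP.bddBelow_fiber_s10 i)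

theorem gc (hP : IsParent P) : GaloisConnection (firstChild P) P := by
  intro i j
  constructor
  · intro h
    simpa only [hP.apply_firstChild] using hP.2 h
  · intro h
    by_contra! hlt
    have hle : P j ≤ i := hP.apply_firstChild i ▸ hP.2 hlt.le
    exact hlt.not_ge (csInf_le (hP.bddBelow_fiber_s10 i) (le_antisymm hle h))

theorem fiber_eq_Ico_s10 (hP : IsParent P) (i : ℤ) :
    {j | P j = i} = Set.Ico (firstChild P i) (firstChild P (i + 1)) := by
  ext j
  rw [Set.mem_ofPred, Set.mem_Ico, ← not_le, hP.gc, hP.gc]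
  omega

theorem ncard_fiber (hP : IsParent P) (i : ℤ) :
    {j | P j = i}.ncard = (firstChild P (i + 1) - firstChild P i).toNat := by
  rw [hP.fiber_eq_Ico_s10, ← Finset.coe_Ico, Set.ncard_coe_finset, Int.card_Ico]

theorem firstChild_comp (hP : IsParent P) (hQ : IsParent Q) :
    firstChild (P ∘ Q) = firstChild Q ∘ firstChild P :=
  funext fun _ => (hP.comp hQ).gc.l_unique (hP.gc.compose hQ.gc) fun _ => rfl

theorem produces_iff (hP : IsParent P) {A : Type*} {R : Set (A × List A)} {ω ω' : ℤ → A} :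
    Produces R P ω ω' ↔ ∀ i, (ω i, wordIco ω' (firstChild P i) (firstChild P (i + 1))) ∈ R := by
  refine forall_congr' fun i => ?_
  simp only [List.get_eq_getElem]
  constructor
  · rintro ⟨w, hw, hlen, hget⟩
    rwa [← (eq_wordIco_iff ω').2 ⟨hlen.trans (hP.ncard_fiber i), hget⟩]
  · intro h
    obtain ⟨hlen, hget⟩ := (eq_wordIco_iff ω').1 rfl
    exact ⟨_, h, hlen.trans (hP.ncard_fiber i).symm, hget⟩

end IsParent

theorem produces_comp_general {A : Type*}
    (R₁ R₂ : Set (A × List A))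
    (P Q : ℤ → ℤ) (hP : IsParent P) (hQ : IsParent Q)
    (ω ω' ω'' : ℤ → A)
    (h₁ : Produces R₁ P ω ω') (h₂ : Produces R₂ Q ω' ω'') :
    IsParent (P ∘ Q) ∧ Produces (RelComp R₁ R₂) (P ∘ Q) ω ω'' := by
  rw [hP.produces_iff] at h₁
  rw [hQ.produces_iff] at h₂
  refine ⟨hP.comp hQ, (hP.comp hQ).produces_iff.2 fun i => ?_⟩
  rw [hP.firstChild_comp hQ]
  exact mem_relComp_wordIco hP.gc.monotone_l hQ.gc.monotone_l i (h₁ i) h₂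

/-- If `ω` produces `ω'` with respect to `P` under `R₁`, and `ω'`
produces `ω''` with respect to `Q` under `R₂`, then `P ∘ Q` is a parent function and
`ω` produces `ω''` with respect to `P ∘ Q` under the composite relation `R₁ ⋆ R₂`. -/
theorem produces_comp {A : Type*} [Fintype A]
    (R₁ R₂ : Set (A × List A)) (hR₁ : R₁.Finite) (hR₂ : R₂.Finite)
    (P Q : ℤ → ℤ) (hP : IsParent P) (hQ : IsParent Q)
    (ω ω' ω'' : ℤ → A)
    (h₁ : Produces R₁ P ω ω') (h₂ : Produces R₂ Q ω' ω'') :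
    IsParent (P ∘ Q) ∧ Produces (RelComp R₁ R₂) (P ∘ Q) ω ω'' :=
  produces_comp_general R₁ R₂ P Q hP hQ ω ω' ω'' h₁ h₂
end

section
/- Let (A, R) be a non-deterministic substitution with an expanding eigenvalue λ > 1 witnessed by v : A → ℝ with v(a) > 0 for all a, let Ω = {(ω^i, P_i)}_{i∈ℤ} be an orbit of (A, R), and let Ψ : ℤ × ℤ → ℝ × ℝ satisfy Ψ(0,0) = (0,0) and, for all (i,j) with Ψ(i,j) = (x,y): Ψ(i, j+1) = (x + v(ω^i_j)·e^y, y) and Ψ(i+1, min P_{i+1}⁻¹({j})) = (x, y − log λ). Then for every point (p₁, p₂) ∈ ℝ² there exists a unique pair (i,j) ∈ ℤ² such that, writing Ψ(i,j) = (x,y), one has x ≤ p₁ < x + v(ω^i_j)·e^y and y − log λ < p₂ ≤ y; that is, the (A,R)-tiles placed at the positions Ψ(i,j) cover ℝ² with pairwise disjoint interiors. -/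
theorem eq_sub_zsmul_of_forall_succ {G : Type*} [AddCommGroup G] {f : ℤ → G} {d : G}
    (h : ∀ n, f (n + 1) = f n - d) (n : ℤ) : f n = f 0 - n • d := by
  have hper : Function.Periodic (fun n => f n + n • d) 1 := fun n => by
    simp only [h, add_zsmul, one_zsmul]
    abel
  have := hper.zsmul_eq n
  simp only [smul_eq_mul, mul_one, zero_smul, add_zero] at this
  rw [← this, add_sub_cancel_right]

theorem StrictMono.existsUnique_le_lt_succ {α : Type*} [LinearOrder α] {x : ℤ → α}
    (hx : StrictMono x) {p : α} (hlo : ∃ j, x j ≤ p) (hhi : ∃ j, p < x j) :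
    ∃! j, x j ≤ p ∧ p < x (j + 1) := by
  obtain ⟨N, hN⟩ := hhi
  have hbdd : ∃ b, ∀ j, x j ≤ p → j ≤ b :=
    ⟨N, fun j hj => (hx.lt_iff_lt.mp (hj.trans_lt hN)).le⟩
  obtain ⟨m, hm, hmax⟩ := Int.exists_greatest_of_bdd hbdd hlo
  have hm_succ : p < x (m + 1) := lt_of_not_ge fun h => (lt_add_one m).not_ge (hmax _ h)
  refine ⟨m, ⟨hm, hm_succ⟩, fun n ⟨hn, hn_succ⟩ => le_antisymm (hmax n hn) ?_⟩
  exact Int.le_of_lt_add_one (hx.lt_iff_lt.mp (hm.trans_lt hn_succ))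

section OrderedAddCommGroup

variable {G : Type*} [AddCommGroup G] [LinearOrder G] [IsOrderedAddMonoid G]

theorem add_sub_zsmul_le_of_forall_add_le_succ {x : ℤ → G} {c : G}
    (hx : ∀ j, x j + c ≤ x (j + 1)) {j k : ℤ} (hjk : j ≤ k) :
    x j + (k - j) • c ≤ x k := by
  induction k, hjk using Int.leInduction with
  | base => simp
  | succ k _ ih =>
    calc x j + (k + 1 - j) • c = x j + (k - j) • c + c := by
          rw [show k + 1 - j = k - j + 1 by ring, add_zsmul, one_zsmul, add_assoc]
      _ ≤ x k + c := by gcongr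
      _ ≤ x (k + 1) := hx k

theorem existsUnique_le_lt_succ_of_forall_add_le_succ [Archimedean G] {x : ℤ → G} {c : G}
    (hc : 0 < c) (hx : ∀ j, x j + c ≤ x (j + 1)) (p : G) :
    ∃! j, x j ≤ p ∧ p < x (j + 1) := by
  have hmono : StrictMono x :=
    strictMono_int_of_lt_succ fun j => (lt_add_of_pos_right _ hc).trans_le (hx j)
  obtain ⟨n, hn⟩ := exists_lt_nsmul hc (p - x 0)
  obtain ⟨n', hn'⟩ := Archimedean.arch (x 0 - p) hc
  refine hmono.existsUnique_le_lt_succ ⟨-n', ?_⟩ ⟨n, ?_⟩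
  · have := add_sub_zsmul_le_of_forall_add_le_succ hx (neg_nonpos.mpr (Int.natCast_nonneg n'))
    simp only [zero_sub, neg_neg, natCast_zsmul] at this
    exact (le_sub_iff_add_le.mpr this).trans (sub_le_comm.mp hn')
  · have := add_sub_zsmul_le_of_forall_add_le_succ hx (Int.natCast_nonneg n)
    simp only [sub_zero, natCast_zsmul] at this
    exact (sub_lt_iff_lt_add'.mp hn).trans_le this

end OrderedAddCommGroup

theorem eq_sub_zsmul_of_row_col {G : Type*} [AddCommGroup G] {y : ℤ → ℤ → G} {d : G}
    (hrow : ∀ i j, y i (j + 1) = y i j) (hcol : ∀ i, ∃ k, y (i + 1) k = y i 0 - d)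
    (i j : ℤ) : y i j = y 0 0 - i • d := by
  have hrow_const : ∀ i j, y i j = y i 0 := fun i j => by
    simpa using
      eq_sub_zsmul_of_forall_succ (f := y i) (d := 0) (fun j => by rw [hrow, sub_zero]) j
  rw [hrow_const]
  refine eq_sub_zsmul_of_forall_succ (f := fun i => y i 0) (fun i => ?_) i
  obtain ⟨k, hk⟩ := hcol i
  rw [← hk, hrow_const (i + 1) k]

theorem substitution_tiles_cover_general {A : Type*} [Fintype A]
    (lam : ℝ) (v : A → ℝ) (hlam : 1 < lam) (hv : ∀ a : A, 0 < v a)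
    (ω : ℤ → ℤ → A) (P : ℤ → ℤ → ℤ)
    (Ψ : ℤ × ℤ → ℝ × ℝ) (h0 : Ψ (0, 0) = (0, 0))
    (hrow : ∀ i j : ℤ,
      Ψ (i, j + 1) = ((Ψ (i, j)).1 + v (ω i j) * Real.exp (Ψ (i, j)).2, (Ψ (i, j)).2))
    (hcol : ∀ i j : ℤ,
      Ψ (i + 1, sInf {k : ℤ | P (i + 1) k = j}) =
        ((Ψ (i, j)).1, (Ψ (i, j)).2 - Real.log lam)) :
    ∀ p : ℝ × ℝ, ∃! ij : ℤ × ℤ,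
      (Ψ ij).1 ≤ p.1 ∧ p.1 < (Ψ ij).1 + v (ω ij.1 ij.2) * Real.exp (Ψ ij).2 ∧
      (Ψ ij).2 - Real.log lam < p.2 ∧ p.2 ≤ (Ψ ij).2 := by
  set L := Real.log lam
  have hL : 0 < L := Real.log_pos hlam
  have hheight : ∀ i j, (Ψ (i, j)).2 = -(i * L) := fun i j => by
    simpa [h0] using eq_sub_zsmul_of_row_col (y := fun i j => (Ψ (i, j)).2) (d := L)
      (fun i j => by simp only [hrow])
      (fun i => ⟨sInf {k | P (i + 1) k = 0}, by simp only [hcol i 0]⟩) i j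
  have hnext : ∀ i j, (Ψ (i, j + 1)).1 = (Ψ (i, j)).1 + v (ω i j) * Real.exp (Ψ (i, j)).2 :=
    fun i j => by rw [hrow]
  have : Nonempty A := ⟨ω 0 0⟩
  obtain ⟨a₀, ha₀⟩ := Finite.exists_min v
  rintro ⟨p₁, p₂⟩
  obtain ⟨i, hi, hi_unique⟩ := existsUnique_add_zsmul_mem_Ioc hL p₂ (-L)
  simp only [Set.mem_Ioc, zsmul_eq_mul, neg_add_cancel] at hi hi_unique
  have hstep : ∀ j, (Ψ (i, j)).1 + v a₀ * Real.exp (-(i * L)) ≤ (Ψ (i, j + 1)).1 := by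
    intro j
    rw [hnext, hheight]
    gcongr
    exact ha₀ _
  obtain ⟨j, hj, hj_unique⟩ :=
    existsUnique_le_lt_succ_of_forall_add_le_succ (mul_pos (hv a₀) (Real.exp_pos _)) hstep p₁
  refine ⟨(i, j), ?_, ?_⟩
  · refine ⟨hj.1, hnext i j ▸ hj.2, ?_, ?_⟩ <;> dsimp only <;> rw [hheight] <;> linarith
  · rintro ⟨i', j'⟩ ⟨hx₁, hx₂, hy₁, hy₂⟩
    rw [← hnext] at hx₂
    simp only [hheight] at hy₁ hy₂
    obtain rfl : i' = i := hi_unique i' ⟨by linarith, by linarith⟩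
    obtain rfl : j' = j := hj_unique j' ⟨hx₁, hx₂⟩
    rfl

/-- Let `(A, R)` have expanding eigenvalue `λ > 1` witnessed by a
positive `v`, let `(ω, P)` be an orbit and `Ψ` a tiling for it with `Ψ(0,0) = (0,0)`.
Then for every point `(p₁, p₂) ∈ ℝ²` there is a unique `(i,j) ∈ ℤ²` such that, writing
`(x,y) = Ψ(i,j)`, one has `x ≤ p₁ < x + v(ω^i_j)·e^y` and `y - log λ < p₂ ≤ y`: the
`(A,R)`-tiles placed at the positions `Ψ(i,j)` cover `ℝ²` with pairwise disjoint
interiors. -/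
theorem substitution_tiles_cover {A : Type*} [Fintype A]
    (R : Set (A × List A)) (hRfin : R.Finite)
    (lam : ℝ) (v : A → ℝ) (hlam : 1 < lam) (hv : ∀ a : A, 0 < v a)
    (hexp : ∀ p ∈ R, lam * v p.1 = (p.2.map v).sum)
    (ω : ℤ → ℤ → A) (P : ℤ → ℤ → ℤ) (horb : IsOrbit R ω P)
    (Ψ : ℤ × ℤ → ℝ × ℝ) (h0 : Ψ (0, 0) = (0, 0))
    (hrow : ∀ i j : ℤ,
      Ψ (i, j + 1) = ((Ψ (i, j)).1 + v (ω i j) * Real.exp (Ψ (i, j)).2, (Ψ (i, j)).2))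
    (hcol : ∀ i j : ℤ,
      Ψ (i + 1, sInf {k : ℤ | P (i + 1) k = j}) =
        ((Ψ (i, j)).1, (Ψ (i, j)).2 - Real.log lam)) :
    ∀ p : ℝ × ℝ, ∃! ij : ℤ × ℤ,
      (Ψ ij).1 ≤ p.1 ∧ p.1 < (Ψ ij).1 + v (ω ij.1 ij.2) * Real.exp (Ψ ij).2 ∧
      (Ψ ij).2 - Real.log lam < p.2 ∧ p.2 ≤ (Ψ ij).2 :=
  substitution_tiles_cover_general lam v hlam hv ω P Ψ h0 hrow hcol
end
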